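/- Let n ∈ ℕ and 0 < α < n. There exists a constant C > 0, depending only on n and α, such that for every f ∈ S₀(ℝⁿ) and every t > 0, (M_α f)*(t) ≤ C sup_{t ≤ s < ∞} s^{α/n} f**(s). -/

import Mathlib

open MeasureTheory Set ENNReal Metric

/-- The class `S₀(ℝⁿ)`. -/
def MemS0 {n : ℕ} (f : EuclideanSpace ℝ (Fin n) → ℝ) : Prop :=
  Measurable f ∧ ∀ y : ℝ, 0 < y → volume {x | y < |f x|} < ⊤

/-- The nonincreasing rearrangement `f*(t) = inf{y > 0 : λ_f(y) < t}`. -/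
noncomputable def rearr {n : ℕ} (f : EuclideanSpace ℝ (Fin n) → ℝ) (t : ℝ) : ℝ :=
  sInf {y : ℝ | 0 < y ∧ volume {x | y < |f x|} < ENNReal.ofReal t}

/-- The maximal rearrangement `f**(t) = (1/t)∫₀^t f*(u) du` (extended reals). -/
noncomputable def rearr2 {n : ℕ} (f : EuclideanSpace ℝ (Fin n) → ℝ) (t : ℝ) : ℝ≥0∞ :=
  (ENNReal.ofReal t)⁻¹ * ∫⁻ u in Ioc (0:ℝ) t, ENNReal.ofReal (rearr f u)

/-- The fractional maximal function
`M_α f(x) = sup_{r>0} |B(x,r)|^(α/n-1) ∫_{B(x,r)} |f|`. -/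
noncomputable def fracMaximalFn {n : ℕ} (α : ℝ) (f : EuclideanSpace ℝ (Fin n) → ℝ)
    (x : EuclideanSpace ℝ (Fin n)) : ℝ≥0∞ :=
  ⨆ r ∈ Ioi (0:ℝ),
    (volume (ball x r)) ^ (α / n - 1) * ∫⁻ y in ball x r, ENNReal.ofReal |f y|

/-- The nonincreasing rearrangement of an `ℝ≥0∞`-valued function. -/
noncomputable def rearrE {n : ℕ} (F : EuclideanSpace ℝ (Fin n) → ℝ≥0∞) (t : ℝ) : ℝ≥0∞ :=
  sInf {y : ℝ≥0∞ | 0 < y ∧ volume {x | y < F x} < ENNReal.ofReal t}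

/-!
Cut `f` at the level `f*(t)`: the part `f₁ = |f| 1_{|f| > f*(t)}` lives on a set of measure at
most `t`, so `‖f₁‖₁ ≤ t f**(t)` by the Hardy–Littlewood inequality, and the rest is bounded by
`f*(t) ≤ f**(t)`. On a ball `B` with `|B| ≥ t` the same inequality gives
`|B|^(α/n-1) ∫_B |f| ≤ |B|^(α/n) f**(|B|)`, and on a smaller ball the mean of `|f|` is at most the
mean of `f₁` plus `f*(t)`. Hence `M_α f ≤ S + t^(α/n) M f₁` with `S = sup_{s ≥ t} s^(α/n) f**(s)`
and `M` the Hardy–Littlewood maximal function, whose weak type (1,1) bound (Vitali covering lemma)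
makes `{M f₁ > λ}` of measure `< t` as soon as `λ > 4ⁿ f**(t)`. So `(M_α f)*(t) ≤ (1 + 4ⁿ) S`.
-/

theorem exists_seq_measure_lt_eq_iSup {X α : Type*} [MeasurableSpace X] [LinearOrder α]
    [TopologicalSpace α] [OrderTopology α] [DenselyOrdered α] [NoMaxOrder α]
    [FirstCountableTopology α] (μ : Measure X) (g : X → α) (y : α) :
    ∃ u : ℕ → α, (∀ k, y < u k) ∧ μ {x | y < g x} = ⨆ k, μ {x | u k < g x} := by
  obtain ⟨u, hu_anti, hu_gt, hu_lim⟩ := exists_seq_strictAnti_tendsto y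
  refine ⟨u, hu_gt, ?_⟩
  have hunion : {x | y < g x} = ⋃ k, {x | u k < g x} := by
    ext x
    simp only [mem_ofPred_eq, mem_iUnion]
    refine ⟨fun hx => (hu_lim.eventually (gt_mem_nhds hx)).exists, ?_⟩
    rintro ⟨k, hk⟩
    exact (hu_gt k).trans hk
  rw [hunion, Monotone.measure_iUnion]
  exact fun k l hkl x hx => (hu_anti.antitone hkl).trans_lt hx

section MaximalFunction

open Module

variable {E : Type*} [NormedAddCommGroup E] [MeasurableSpace E]

noncomputable def maximalFn (μ : Measure E) (g : E → ℝ≥0∞) (x : E) : ℝ≥0∞ :=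
  ⨆ r ∈ Ioi (0:ℝ), (μ (ball x r))⁻¹ * ∫⁻ y in ball x r, g y ∂μ

variable [NormedSpace ℝ E] [FiniteDimensional ℝ E] {μ : Measure E} [μ.IsAddHaarMeasure]

theorem exists_lt_setLIntegral_ball_of_lt_maximalFn {g : E → ℝ≥0∞} {a : ℝ≥0∞} {x : E}
    (h : a < maximalFn μ g x) :
    ∃ r, 0 < r ∧ a * μ (ball x r) < ∫⁻ y in ball x r, g y ∂μ := by
  simp only [maximalFn, lt_iSup_iff, mem_Ioi] at h
  obtain ⟨r, hr, h⟩ := h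
  refine ⟨r, hr, ?_⟩
  rwa [← ENNReal.lt_div_iff_mul_lt (Or.inl (measure_ball_pos μ x hr).ne')
    (Or.inl measure_ball_lt_top.ne), ENNReal.div_eq_inv_mul]

variable [BorelSpace E] [Nontrivial E]

theorem exists_bound_of_lt_setLIntegral_ball {g : E → ℝ≥0∞}
    (hg : ∫⁻ y, g y ∂μ ≠ ⊤) {a : ℝ≥0∞} (ha : a ≠ 0) :
    ∃ R, ∀ x r, 0 < r → a * μ (ball x r) < ∫⁻ y in ball x r, g y ∂μ → r ≤ R := by
  have hunit : μ (ball (0 : E) 1) ≠ 0 := (measure_ball_pos μ 0 one_pos).ne'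
  set V := (∫⁻ y, g y ∂μ) / a / μ (ball (0 : E) 1)
  have hV : V ≠ ⊤ := ENNReal.div_ne_top (ENNReal.div_ne_top hg ha) hunit
  refine ⟨max 1 V.toReal, fun x r hr hlt => ?_⟩
  have hpow : ENNReal.ofReal (r ^ finrank ℝ E) ≤ V := by
    rw [ENNReal.le_div_iff_mul_le (Or.inl hunit) (Or.inl measure_ball_lt_top.ne),
      ← Measure.addHaar_ball_of_pos μ x hr, ENNReal.le_div_iff_mul_le (Or.inl ha) (Or.inr hg),
      mul_comm]
    exact hlt.le.trans (setLIntegral_le_lintegral _ _)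
  rcases le_total r 1 with hr1 | hr1
  · exact hr1.trans (le_max_left _ _)
  · calc r ≤ r ^ finrank ℝ E := le_self_pow₀ hr1 finrank_pos.ne'
      _ ≤ V.toReal := (ENNReal.ofReal_le_iff_le_toReal hV).1 hpow
      _ ≤ _ := le_max_right _ _

theorem measure_closedBall_four_mul_le {g : E → ℝ≥0∞} {a : ℝ≥0∞} (ha : a ≠ 0) (ha' : a ≠ ⊤)
    {x : E} {r : ℝ} (h : a * μ (ball x r) ≤ ∫⁻ y in ball x r, g y ∂μ) :
    μ (closedBall x (4 * r)) ≤ 4 ^ finrank ℝ E * a⁻¹ * ∫⁻ y in ball x r, g y ∂μ := by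
  rw [Measure.addHaar_closedBall_eq_addHaar_ball, Measure.addHaar_ball_mul_of_pos μ x four_pos,
    ← Measure.addHaar_ball_center μ x, ENNReal.ofReal_pow zero_le_four, ENNReal.ofReal_ofNat,
    mul_assoc]
  gcongr
  rwa [← ENNReal.div_eq_inv_mul, ENNReal.le_div_iff_mul_le (Or.inl ha) (Or.inl ha'), mul_comm]

theorem measure_le_of_lt_setLIntegral_ball {g : E → ℝ≥0∞} {a : ℝ≥0∞}
    (ha : a ≠ 0) {G : Set E} {ρ : E → ℝ}
    (hρ : ∀ x ∈ G, 0 < ρ x ∧ a * μ (ball x (ρ x)) < ∫⁻ y in ball x (ρ x), g y ∂μ) :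
    μ G ≤ 4 ^ finrank ℝ E * a⁻¹ * ∫⁻ y, g y ∂μ := by
  rcases eq_or_ne a ⊤ with rfl | ha'
  · have hG : G = ∅ := eq_empty_of_forall_notMem fun x hx => by
      obtain ⟨hρx, hlt⟩ := hρ x hx
      rw [ENNReal.top_mul (measure_ball_pos μ x hρx).ne'] at hlt
      exact not_top_lt hlt
    simp [hG]
  rcases eq_or_ne (∫⁻ y, g y ∂μ) ⊤ with hg | hg
  · rw [hg, ENNReal.mul_top (by simp [ha'])]
    exact le_top
  obtain ⟨R, hR⟩ := exists_bound_of_lt_setLIntegral_ball hg ha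
  obtain ⟨u, huG, hdisj, hcover⟩ := Vitali.exists_disjoint_subfamily_covering_enlargement_closedBall
    G id ρ R (fun x hx => hR x _ (hρ x hx).1 (hρ x hx).2) 4 (by norm_num)
  simp only [id] at hdisj hcover
  have hu : u.Countable := hdisj.countable_of_nonempty_interior fun x hx =>
    ⟨x, ball_subset_interior_closedBall (mem_ball_self (hρ x (huG hx)).1)⟩
  have hGu : G ⊆ ⋃ x ∈ u, closedBall x (4 * ρ x) := fun x hx => by
    obtain ⟨c, hc, hsub⟩ := hcover x hx
    exact mem_biUnion hc (hsub (mem_closedBall_self (hρ x hx).1.le))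
  calc μ G ≤ ∑' x : u, μ (closedBall x (4 * ρ x)) :=
        (measure_mono hGu).trans (measure_biUnion_le μ hu _)
    _ ≤ ∑' x : u, 4 ^ finrank ℝ E * a⁻¹ * ∫⁻ y in ball x (ρ x), g y ∂μ :=
      ENNReal.tsum_le_tsum fun x => measure_closedBall_four_mul_le ha ha' (hρ x (huG x.2)).2.le
    _ = 4 ^ finrank ℝ E * a⁻¹ * ∫⁻ y in ⋃ x ∈ u, ball x (ρ x), g y ∂μ := by
      rw [ENNReal.tsum_mul_left, lintegral_biUnion hu (fun _ _ => measurableSet_ball)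
        (hdisj.mono fun _ => ball_subset_closedBall)]
    _ ≤ 4 ^ finrank ℝ E * a⁻¹ * ∫⁻ y, g y ∂μ := by
      gcongr
      exact Measure.restrict_le_self

theorem measure_lt_maximalFn_le (g : E → ℝ≥0∞) {a : ℝ≥0∞} (ha : a ≠ 0) :
    μ {x | a < maximalFn μ g x} ≤ 4 ^ finrank ℝ E * a⁻¹ * ∫⁻ y, g y ∂μ := by
  choose! ρ hρ using fun x (hx : a < maximalFn μ g x) =>
    exists_lt_setLIntegral_ball_of_lt_maximalFn hx
  exact measure_le_of_lt_setLIntegral_ball ha hρ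

end MaximalFunction

theorem ENNReal.rpow_sub_one_mul {a : ℝ≥0∞} (ha0 : a ≠ 0) (ha : a ≠ ⊤) (p : ℝ) (b : ℝ≥0∞) :
    a ^ (p - 1) * b = a ^ p * (a⁻¹ * b) := by
  rw [sub_eq_add_neg, ENNReal.rpow_add _ _ ha0 ha, ENNReal.rpow_neg_one, mul_assoc]

section Rearrangement

variable {n : ℕ} {f : EuclideanSpace ℝ (Fin n) → ℝ}

theorem MemS0.exists_volume_lt (hf : MemS0 f) {ε : ℝ≥0∞} (hε : 0 < ε) :
    ∃ y, 0 < y ∧ volume {x | y < |f x|} < ε := by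
  set s : ℕ → Set (EuclideanSpace ℝ (Fin n)) := fun k => {x | (k : ℝ) + 1 < |f x|}
  have hs : Antitone s := fun k l hkl x (hx : (l : ℝ) + 1 < |f x|) =>
    show (k : ℝ) + 1 < |f x| from lt_of_le_of_lt (by gcongr) hx
  have hempty : ⋂ k, s k = ∅ := eq_empty_of_forall_notMem fun x hx => by
    obtain ⟨k, hk⟩ := exists_nat_gt |f x|
    have hxk : (k : ℝ) + 1 < |f x| := mem_iInter.1 hx k
    linarith
  have hlim := tendsto_measure_iInter_atTop (μ := volume)
    (fun k => (measurableSet_lt measurable_const hf.1.abs).nullMeasurableSet) hs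
    ⟨0, by simpa [s] using (hf.2 1 one_pos).ne⟩
  rw [hempty, measure_empty] at hlim
  obtain ⟨k, hk⟩ := (hlim.eventually (gt_mem_nhds hε)).exists
  exact ⟨k + 1, by positivity, hk⟩

theorem rearr_nonneg (f : EuclideanSpace ℝ (Fin n) → ℝ) (u : ℝ) : 0 ≤ rearr f u :=
  Real.sInf_nonneg fun _ hy => hy.1.le

theorem MemS0.rearr_set_nonempty (hf : MemS0 f) {u : ℝ} (hu : 0 < u) :
    {y : ℝ | 0 < y ∧ volume {x | y < |f x|} < ENNReal.ofReal u}.Nonempty :=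
  hf.exists_volume_lt (ENNReal.ofReal_pos.2 hu)

theorem MemS0.le_rearr (hf : MemS0 f) {u y : ℝ} (hu : 0 < u)
    (h : ENNReal.ofReal u ≤ volume {x | y < |f x|}) : y ≤ rearr f u :=
  le_csInf (hf.rearr_set_nonempty hu) fun _ hz => not_lt.1 fun hzy =>
    (h.trans (measure_mono fun _ hx => hzy.trans hx)).not_gt hz.2

theorem MemS0.rearr_antitoneOn (hf : MemS0 f) : AntitoneOn (rearr f) (Ioi 0) :=
  fun _ hu _ _ huv => csInf_le_csInf ⟨0, fun _ hz => hz.1.le⟩ (hf.rearr_set_nonempty hu)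
    fun _ hz => ⟨hz.1, hz.2.trans_le (ENNReal.ofReal_le_ofReal huv)⟩

theorem MemS0.volume_rearr_lt_le (hf : MemS0 f) {t : ℝ} (ht : 0 < t) :
    volume {x | rearr f t < |f x|} ≤ ENNReal.ofReal t := by
  obtain ⟨v, hv, heq⟩ := exists_seq_measure_lt_eq_iSup volume (fun x => |f x|) (rearr f t)
  rw [heq]
  refine iSup_le fun k => ?_
  obtain ⟨z, hz, hzv⟩ := exists_lt_of_csInf_lt (hf.rearr_set_nonempty ht) (hv k)
  exact (measure_mono fun x hx => hzv.trans hx).trans hz.2.le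

theorem MemS0.volume_lt_inter_le (hf : MemS0 f) {A : Set (EuclideanSpace ℝ (Fin n))} {a : ℝ}
    (hA : volume A ≤ ENNReal.ofReal a) {y : ℝ} (hy : 0 < y) :
    volume ({x | y < |f x|} ∩ A) ≤ volume ({u | y < rearr f u} ∩ Ioc 0 a) := by
  have hmeas : ∀ z, MeasurableSet {x | z < |f x|} := fun _ =>
    measurableSet_lt measurable_const hf.1.abs
  obtain ⟨v, hv, heq⟩ := exists_seq_measure_lt_eq_iSup (volume.restrict A) (fun x => |f x|) y
  rw [← Measure.restrict_apply (hmeas y), heq]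
  refine iSup_le fun k => ?_
  rw [Measure.restrict_apply (hmeas _)]
  have hfin : volume {x | v k < |f x|} ≠ ⊤ := (hf.2 _ (hy.trans (hv k))).ne
  calc volume ({x | v k < |f x|} ∩ A)
      ≤ min (ENNReal.ofReal a) (volume {x | v k < |f x|}) :=
        le_min ((measure_mono inter_subset_right).trans hA) (measure_mono inter_subset_left)
    _ = volume (Ioc 0 (min a (volume {x | v k < |f x|}).toReal)) := by
        rw [Real.volume_Ioc, sub_zero, ENNReal.ofReal_min, ENNReal.ofReal_toReal hfin]
    _ ≤ volume ({u | y < rearr f u} ∩ Ioc 0 a) := by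
        refine measure_mono fun u ⟨hu0, hum⟩ => ⟨(hv k).trans_le (hf.le_rearr hu0 ?_), hu0,
          hum.trans (min_le_left _ _)⟩
        exact ENNReal.ofReal_le_of_le_toReal (hum.trans (min_le_right _ _))

/-- The Hardy–Littlewood inequality, compared level by level through the layer-cake formula. -/
theorem MemS0.setLIntegral_le_rearr (hf : MemS0 f) {A : Set (EuclideanSpace ℝ (Fin n))} {a : ℝ}
    (hA : volume A ≤ ENNReal.ofReal a) :
    ∫⁻ x in A, ENNReal.ofReal |f x| ≤ ∫⁻ u in Ioc 0 a, ENNReal.ofReal (rearr f u) := by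
  rw [lintegral_eq_lintegral_meas_lt _ (ae_of_all _ fun x => abs_nonneg (f x))
      hf.1.abs.aemeasurable,
    lintegral_eq_lintegral_meas_lt _ (ae_of_all _ (rearr_nonneg f))
      (aemeasurable_restrict_of_antitoneOn measurableSet_Ioc
        (hf.rearr_antitoneOn.mono Ioc_subset_Ioi_self))]
  refine setLIntegral_mono' measurableSet_Ioi fun y (hy : 0 < y) => ?_
  rw [Measure.restrict_apply (measurableSet_lt measurable_const hf.1.abs),
    Measure.restrict_apply' measurableSet_Ioc]
  exact hf.volume_lt_inter_le hA hy

end Rearrangement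

section FractionalMaximal

variable {n : ℕ} {f : EuclideanSpace ℝ (Fin n) → ℝ} {α t : ℝ}

noncomputable def fracRearr2Sup (α : ℝ) (f : EuclideanSpace ℝ (Fin n) → ℝ) (t : ℝ) : ℝ≥0∞ :=
  ⨆ s ∈ Ici t, ENNReal.ofReal (s ^ (α / n)) * rearr2 f s

theorem le_fracRearr2Sup {s : ℝ} (hts : t ≤ s) :
    ENNReal.ofReal (s ^ (α / n)) * rearr2 f s ≤ fracRearr2Sup α f t :=
  le_biSup (fun s => ENNReal.ofReal (s ^ (α / n)) * rearr2 f s) hts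

noncomputable def absAboveRearr (f : EuclideanSpace ℝ (Fin n) → ℝ) (t : ℝ) :
    EuclideanSpace ℝ (Fin n) → ℝ≥0∞ :=
  {x | rearr f t < |f x|}.indicator fun x => ENNReal.ofReal |f x|

theorem ofReal_mul_rearr2 (f : EuclideanSpace ℝ (Fin n) → ℝ) (ht : 0 < t) :
    ENNReal.ofReal t * rearr2 f t = ∫⁻ u in Ioc 0 t, ENNReal.ofReal (rearr f u) := by
  rw [rearr2, ← mul_assoc, ENNReal.mul_inv_cancel (ENNReal.ofReal_pos.2 ht).ne' ofReal_ne_top,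
    one_mul]

theorem MemS0.ofReal_rearr_le_rearr2 (hf : MemS0 f) (ht : 0 < t) :
    ENNReal.ofReal (rearr f t) ≤ rearr2 f t := by
  rw [← ENNReal.mul_le_mul_iff_right (ENNReal.ofReal_pos.2 ht).ne' ofReal_ne_top,
    ofReal_mul_rearr2 f ht]
  calc ENNReal.ofReal t * ENNReal.ofReal (rearr f t)
      = ∫⁻ _ in Ioc 0 t, ENNReal.ofReal (rearr f t) := by
        rw [setLIntegral_const, Real.volume_Ioc, sub_zero, mul_comm]
    _ ≤ ∫⁻ u in Ioc 0 t, ENNReal.ofReal (rearr f u) :=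
        setLIntegral_mono' measurableSet_Ioc fun u hu =>
          ENNReal.ofReal_le_ofReal (hf.rearr_antitoneOn hu.1 ht hu.2)

theorem MemS0.rpow_sub_one_mul_setLIntegral_le (hf : MemS0 f) (p : ℝ) {s : ℝ} (hs : 0 < s)
    {A : Set (EuclideanSpace ℝ (Fin n))} (hA : volume A = ENNReal.ofReal s) :
    volume A ^ (p - 1) * ∫⁻ x in A, ENNReal.ofReal |f x| ≤ ENNReal.ofReal (s ^ p) * rearr2 f s := by
  rw [ENNReal.rpow_sub_one_mul (hA ▸ (ENNReal.ofReal_pos.2 hs).ne') (hA ▸ ofReal_ne_top), hA,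
    ENNReal.ofReal_rpow_of_pos hs, rearr2]
  gcongr
  exact hf.setLIntegral_le_rearr hA.le

theorem MemS0.lintegral_indicator_rearr_lt_le (hf : MemS0 f) (ht : 0 < t) :
    ∫⁻ x, absAboveRearr f t x ≤ ENNReal.ofReal t * rearr2 f t := by
  rw [absAboveRearr, lintegral_indicator (measurableSet_lt measurable_const hf.1.abs),
    ofReal_mul_rearr2 f ht]
  exact hf.setLIntegral_le_rearr (hf.volume_rearr_lt_le ht)

theorem average_abs_le_average_indicator_add (f : EuclideanSpace ℝ (Fin n) → ℝ) (t : ℝ)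
    {B : Set (EuclideanSpace ℝ (Fin n))} (hB0 : volume B ≠ 0) (hB : volume B ≠ ⊤) :
    (volume B)⁻¹ * ∫⁻ x in B, ENNReal.ofReal |f x|
      ≤ (volume B)⁻¹ * (∫⁻ x in B, absAboveRearr f t x) + ENNReal.ofReal (rearr f t) := by
  calc (volume B)⁻¹ * ∫⁻ x in B, ENNReal.ofReal |f x|
      ≤ (volume B)⁻¹ * ∫⁻ x in B, (absAboveRearr f t x + ENNReal.ofReal (rearr f t)) := by
        gcongr with x
        by_cases h : rearr f t < |f x|
        · simp [absAboveRearr, h]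
        · simpa [absAboveRearr, h] using ENNReal.ofReal_le_ofReal (not_lt.1 h)
    _ = _ := by
        rw [lintegral_add_right _ measurable_const, setLIntegral_const, mul_add,
          mul_comm (ENNReal.ofReal _), ← mul_assoc, ENNReal.inv_mul_cancel hB0 hB, one_mul]

theorem MemS0.fracMaximalFn_le (hf : MemS0 f) (hα : 0 ≤ α) (ht : 0 < t)
    (x : EuclideanSpace ℝ (Fin n)) :
    fracMaximalFn α f x ≤ fracRearr2Sup α f t
      + ENNReal.ofReal (t ^ (α / n)) * maximalFn volume (absAboveRearr f t) x := by
  refine iSup₂_le fun r (hr : 0 < r) => ?_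
  have hB0 : volume (ball x r) ≠ 0 := (measure_ball_pos volume x hr).ne'
  have hB : volume (ball x r) ≠ ⊤ := measure_ball_lt_top.ne
  rcases le_or_gt (ENNReal.ofReal t) (volume (ball x r)) with hlarge | hsmall
  · have hts : t ≤ (volume (ball x r)).toReal := (ENNReal.ofReal_le_iff_le_toReal hB).1 hlarge
    calc _ ≤ ENNReal.ofReal ((volume (ball x r)).toReal ^ (α / n))
            * rearr2 f (volume (ball x r)).toReal :=
          hf.rpow_sub_one_mul_setLIntegral_le _ (ht.trans_le hts) (ENNReal.ofReal_toReal hB).symm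
      _ ≤ fracRearr2Sup α f t := le_fracRearr2Sup hts
      _ ≤ _ := le_self_add
  · rw [ENNReal.rpow_sub_one_mul hB0 hB]
    calc _ ≤ ENNReal.ofReal (t ^ (α / n)) * ((volume (ball x r))⁻¹
            * (∫⁻ y in ball x r, absAboveRearr f t y) + ENNReal.ofReal (rearr f t)) := by
          gcongr ?_ * ?_
          · rw [← ENNReal.ofReal_rpow_of_pos ht]
            exact ENNReal.rpow_le_rpow hsmall.le (by positivity)
          · exact average_abs_le_average_indicator_add f t hB0 hB
      _ ≤ ENNReal.ofReal (t ^ (α / n)) * maximalFn volume (absAboveRearr f t) x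
          + ENNReal.ofReal (t ^ (α / n)) * rearr2 f t := by
          rw [mul_add]
          gcongr
          · exact le_biSup (fun r => (volume (ball x r))⁻¹ * ∫⁻ y in ball x r,
              absAboveRearr f t y) hr
          · exact hf.ofReal_rearr_le_rearr2 ht
      _ ≤ _ := by
          rw [add_comm]
          gcongr
          exact le_fracRearr2Sup le_rfl

theorem MemS0.rearrE_fracMaximalFn_le (hf : MemS0 f) (hn : 0 < n) (hα : 0 ≤ α) (ht : 0 < t)
    {a : ℝ≥0∞} (ha : 4 ^ n * rearr2 f t < a) :
    rearrE (fracMaximalFn α f) t ≤ fracRearr2Sup α f t + ENNReal.ofReal (t ^ (α / n)) * a := by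
  have : Nonempty (Fin n) := ⟨⟨0, hn⟩⟩
  set S := fracRearr2Sup α f t
  set c := ENNReal.ofReal (t ^ (α / n))
  rcases eq_or_ne S ⊤ with hS | hS
  · simp [hS]
  have hc : c ≠ 0 := (ENNReal.ofReal_pos.2 (Real.rpow_pos_of_pos ht _)).ne'
  have ha0 : a ≠ 0 := (zero_le.trans_lt ha).ne'
  have hlevel :
      {x | S + c * a < fracMaximalFn α f x} ⊆ {x | a < maximalFn volume (absAboveRearr f t) x} :=
    fun x hx => (ENNReal.mul_lt_mul_iff_right hc ofReal_ne_top).1 <|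
      (ENNReal.add_lt_add_iff_left hS).1 <| hx.trans_le (hf.fracMaximalFn_le hα ht x)
  have hratio : 4 ^ n * rearr2 f t / a < 1 := by
    rwa [ENNReal.div_lt_iff (Or.inl ha0) (Or.inr (ne_top_of_lt ha)), one_mul]
  refine sInf_le ⟨(ENNReal.mul_pos hc ha0).trans_le le_add_self, ?_⟩
  calc volume {x | S + c * a < fracMaximalFn α f x}
      ≤ 4 ^ n * a⁻¹ * ∫⁻ x, absAboveRearr f t x := (measure_mono hlevel).trans
        (by simpa using measure_lt_maximalFn_le (absAboveRearr f t) ha0)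
    _ ≤ 4 ^ n * a⁻¹ * (ENNReal.ofReal t * rearr2 f t) := by
        gcongr
        exact hf.lintegral_indicator_rearr_lt_le ht
    _ = 4 ^ n * rearr2 f t / a * ENNReal.ofReal t := by
        rw [ENNReal.div_eq_inv_mul]
        ring
    _ < 1 * ENNReal.ofReal t :=
        ENNReal.mul_lt_mul_left (ENNReal.ofReal_pos.2 ht).ne' ofReal_ne_top hratio
    _ = ENNReal.ofReal t := one_mul _

theorem MemS0.rearrE_fracMaximalFn_le_add (hf : MemS0 f) (hn : 0 < n) (hα : 0 ≤ α)
    (ht : 0 < t) :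
    rearrE (fracMaximalFn α f) t
      ≤ fracRearr2Sup α f t + 4 ^ n * (ENNReal.ofReal (t ^ (α / n)) * rearr2 f t) := by
  set c := ENNReal.ofReal (t ^ (α / n))
  have hc : c ≠ 0 := (ENNReal.ofReal_pos.2 (Real.rpow_pos_of_pos ht _)).ne'
  rcases eq_or_ne (rearr2 f t) ⊤ with hD | hD
  · simp [hD, hc]
  refine ENNReal.le_of_forall_pos_le_add fun ε hε _ => ?_
  calc rearrE (fracMaximalFn α f) t
      ≤ fracRearr2Sup α f t + c * (4 ^ n * rearr2 f t + ε / c) :=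
        hf.rearrE_fracMaximalFn_le hn hα ht <| ENNReal.lt_add_right (by finiteness)
          (ENNReal.div_pos (by exact_mod_cast hε.ne') ofReal_ne_top).ne'
    _ = fracRearr2Sup α f t + 4 ^ n * (c * rearr2 f t) + ε := by
        rw [mul_add, ENNReal.mul_div_cancel hc ofReal_ne_top]
        ring

end FractionalMaximal

theorem ckop_fractional_maximal_rearrangement_general (n : ℕ) (hn : 0 < n) (α : ℝ)
    (hα0 : 0 < α) :
    ∃ C : ℝ, 0 < C ∧
      ∀ f : EuclideanSpace ℝ (Fin n) → ℝ, MemS0 f →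
        ∀ t : ℝ, 0 < t →
          rearrE (fracMaximalFn α f) t
            ≤ ENNReal.ofReal C *
                ⨆ s ∈ Ici t, ENNReal.ofReal (s ^ (α / n)) * rearr2 f s := by
  refine ⟨1 + 4 ^ n, by positivity, fun f hf t ht => ?_⟩
  calc rearrE (fracMaximalFn α f) t
      ≤ fracRearr2Sup α f t + 4 ^ n * (ENNReal.ofReal (t ^ (α / n)) * rearr2 f t) :=
        hf.rearrE_fracMaximalFn_le_add hn hα0.le ht
    _ ≤ fracRearr2Sup α f t + 4 ^ n * fracRearr2Sup α f t := by
        gcongr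
        exact le_fracRearr2Sup le_rfl
    _ = ENNReal.ofReal (1 + 4 ^ n) * fracRearr2Sup α f t := by
        rw [ENNReal.ofReal_add zero_le_one (by positivity), ENNReal.ofReal_one,
          ENNReal.ofReal_pow zero_le_four, ENNReal.ofReal_ofNat]
        ring

/-- **Cianchi–Kerman–Opic–Pick rearrangement estimate for the fractional maximal
function.** Let `0 < α < n`. There is `C > 0` depending only on `n` and `α` such that
for every `f ∈ S₀(ℝⁿ)` and every `t > 0`,
`(M_α f)*(t) ≤ C sup_{t ≤ s < ∞} s^(α/n) f**(s)`. -/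
theorem ckop_fractional_maximal_rearrangement (n : ℕ) (hn : 0 < n) (α : ℝ)
    (hα0 : 0 < α) (hαn : α < n) :
    ∃ C : ℝ, 0 < C ∧
      ∀ f : EuclideanSpace ℝ (Fin n) → ℝ, MemS0 f →
        ∀ t : ℝ, 0 < t →
          rearrE (fracMaximalFn α f) t
            ≤ ENNReal.ofReal C *
                ⨆ s ∈ Ici t, ENNReal.ofReal (s ^ (α / n)) * rearr2 f s :=
  ckop_fractional_maximal_rearrangement_general n hn α hα0
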